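/- Fix m ≥ 3 and let μ ∈ Opt(m). For any vertex x ∈ supp μ̄, μ̄(x) ≤ 2/m, with equality if and only if x belongs to every unlabeled m-cycle of the support graph G_μ. -/

import Mathlib

open Finset

/-- The cyclic successor of an index in `Fin m`. -/
def cnext {m : ℕ} (i : Fin m) : Fin m := ⟨(i.1 + 1) % m, Nat.mod_lt _ i.pos⟩

/-- `μ` is a probability mass on the 2-element subsets of `X`: it is nonnegative,
vanishes on the diagonal, and has total mass 1. -/
def IsProbMass {X : Type*} [Fintype X] [DecidableEq X] (μ : Sym2 X → ℝ) : Prop :=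
  (∀ e, 0 ≤ μ e) ∧ (∀ e : Sym2 X, e.IsDiag → μ e = 0) ∧ (∑ e : Sym2 X, μ e) = 1

/-- The weight `μ(C)` of the labeled cycle `f 0, f 1, ..., f (m-1), f 0`. -/
def cycleWeight {X : Type*} (μ : Sym2 X → ℝ) {m : ℕ} (f : Fin m → X) : ℝ :=
  ∏ i : Fin m, μ s(f i, f (cnext i))

/-- `β(μ; m)`: the sum of `μ(C)` over all unlabeled `m`-cycles `C` in the complete
graph on `X`, computed as the sum over labeled cycles divided by `2m` (each unlabeled
`m`-cycle has exactly `2m` labelings). -/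
noncomputable def beta {X : Type*} [Fintype X] [DecidableEq X] (μ : Sym2 X → ℝ) (m : ℕ) : ℝ :=
  (∑ f : Fin m → X, if Function.Injective f then cycleWeight μ f else 0) / (2 * m)

/-- `β(m)`: the supremum of `β(μ; m)` over all probability masses `μ` on the
2-element subsets of a finite set (every finite set being a copy of some `Fin n`). -/
noncomputable def betaSup (m : ℕ) : ℝ :=
  sSup {b : ℝ | ∃ (n : ℕ) (μ : Sym2 (Fin n) → ℝ), IsProbMass μ ∧ b = beta μ m}

/-- The weighted degree `μ̄(x) = ∑_{y ≠ x} μ(xy)`. -/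
noncomputable def wdeg {X : Type*} [Fintype X] [DecidableEq X] (μ : Sym2 X → ℝ) (x : X) : ℝ :=
  ∑ y ∈ Finset.univ.filter (· ≠ x), μ s(x, y)

/-- The support graph `G_μ`, whose edges are the pairs of positive mass. -/
def supportGraph {X : Type*} (μ : Sym2 X → ℝ) : SimpleGraph X where
  Adj x y := x ≠ y ∧ 0 < μ s(x, y)
  symm := ⟨fun x y h => ⟨h.1.symm, by rw [Sym2.eq_swap]; exact h.2⟩⟩
  loopless := ⟨fun x h => h.1 rfl⟩

/-!
Let `T(μ)` be the sum of `μ(C)` over labeled injective `m`-cycles and `∂ₑT` its partial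
derivative in the coordinate `μ(e)`. Moving mass `t` from an edge `e₀ ∈ supp μ` to any edge `e₁`
keeps `μ` a probability mass, so optimality forces `∂_{e₁}T ≤ ∂_{e₀}T`: the partial derivatives
are constant on `supp μ`, and by Euler's identity for the `m`-homogeneous `T` the constant is
`m T`. Summing `μ(e) ∂ₑT` over the edges through `x` counts every cycle through `x` twice, so
`μ̄(x) · m T = 2 (T - A)`, where `A ≥ 0` is the weight of the cycles avoiding `x`. As `T > 0`,
`μ̄(x) ≤ 2/m`, with equality iff no cycle of positive weight avoids `x`.
-/

lemma cnext_eq_add_one {m : ℕ} [NeZero m] (i : Fin m) : cnext i = i + 1 := by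
  ext
  simp [cnext, Fin.val_add]

lemma cnext_ne {m : ℕ} (hm : 2 ≤ m) (i : Fin m) : cnext i ≠ i := by
  have : NeZero m := ⟨by omega⟩
  rw [cnext_eq_add_one, Ne, add_eq_left]
  exact Fin.ne_of_val_ne (by rw [Fin.val_one', Nat.mod_eq_of_lt hm]; simp)

theorem HasDerivAt.nonpos_of_isMaxOn_Icc {g : ℝ → ℝ} {B a b : ℝ} (hg : HasDerivAt g B a)
    (hab : a < b) (hmax : IsMaxOn g (Set.Icc a b) a) : B ≤ 0 := by
  have hcone : b - a ∈ posTangentConeAt (Set.Icc a b) a :=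
    sub_mem_posTangentConeAt_of_segment_subset (segment_eq_Icc hab.le ▸ subset_rfl)
  have := hmax.localize.hasFDerivWithinAt_nonpos hg.hasDerivWithinAt.hasFDerivWithinAt hcone
  simp only [ContinuousLinearMap.toSpanSingleton_apply, smul_eq_mul] at this
  exact nonpos_of_mul_nonpos_right this (sub_pos.mpr hab)

def Sym2.equivCongr {X Y : Type*} (g : X ≃ Y) : Sym2 X ≃ Sym2 Y where
  toFun := Sym2.map g
  invFun := Sym2.map g.symm
  left_inv _ := by simp [Sym2.map_map]
  right_inv _ := by simp [Sym2.map_map]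

lemma cycleWeight_nonneg {X : Type*} {μ : Sym2 X → ℝ} {m : ℕ} (h0 : ∀ e, 0 ≤ μ e)
    (f : Fin m → X) : 0 ≤ cycleWeight μ f :=
  prod_nonneg fun _ _ => h0 _

lemma card_filter_apply_eq_of_injective {X : Type*} [DecidableEq X] {m : ℕ} {f : Fin m → X}
    (hf : Function.Injective f) (x : X) :
    #{i | f i = x} = if x ∈ Set.range f then 1 else 0 := by
  split_ifs with hx
  · obtain ⟨i₀, rfl⟩ := hx
    exact card_eq_one.mpr ⟨i₀, by ext i; simp [hf.eq_iff]⟩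
  · exact card_eq_zero.mpr (filter_eq_empty_iff.mpr fun i _ h => hx ⟨i, h⟩)

lemma card_filter_mem_cycleEdge {X : Type*} [DecidableEq X] {m : ℕ} (hm : 2 ≤ m)
    {f : Fin m → X} (hf : Function.Injective f) (x : X) :
    #{i | x ∈ s(f i, f (cnext i))} = if x ∈ Set.range f then 2 else 0 := by
  have : NeZero m := ⟨by omega⟩
  have hcnext : Function.Bijective (cnext : Fin m → Fin m) := by
    simpa [funext cnext_eq_add_one] using (Equiv.addRight (1 : Fin m)).bijective
  have hmem : ∀ i, x ∈ s(f i, f (cnext i)) ↔ f i = x ∨ (f ∘ cnext) i = x := by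
    simp [Sym2.mem_iff, eq_comm]
  simp_rw [hmem, filter_or]
  rw [card_union_of_disjoint
      (disjoint_filter.mpr fun i _ h h' => cnext_ne hm i (hf (h'.trans h.symm))),
    card_filter_apply_eq_of_injective hf, card_filter_apply_eq_of_injective (hf.comp hcnext.1)]
  simp only [Set.range_comp, hcnext.2.range_eq, Set.image_univ]
  split_ifs <;> rfl

section
variable {X : Type*} [Fintype X] [DecidableEq X] {μ : Sym2 X → ℝ} {m : ℕ}

noncomputable def cycleSum (μ : Sym2 X → ℝ) (m : ℕ) : ℝ :=
  ∑ f : Fin m → X with Function.Injective f, cycleWeight μ f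

lemma beta_eq_cycleSum_div : beta μ m = cycleSum μ m / (2 * m) := by
  rw [beta, cycleSum, sum_filter]

lemma card_filter_mk_eq_mk_of_ne {a b : X} (hab : a ≠ b) :
    #{p : X × X | s(p.1, p.2) = s(a, b)} = 2 := by
  rw [show ({p : X × X | s(p.1, p.2) = s(a, b)} : Finset (X × X)) = {(a, b), (b, a)} by
    ext p; simp [Prod.ext_iff]]
  exact card_pair (by simp [hab])

lemma IsProbMass.sum_mk_eq_two (hμ : IsProbMass μ) : ∑ p : X × X, μ s(p.1, p.2) = 2 := by
  rw [← sum_fiberwise' univ (fun p : X × X => s(p.1, p.2)) μ, ← mul_one 2, ← hμ.2.2, mul_sum]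
  refine sum_congr rfl fun e _ => ?_
  induction e using Sym2.ind with
  | _ a b =>
    rcases eq_or_ne a b with rfl | hab
    · simp [hμ.2.1 s(a, a) (Sym2.mk_isDiag_iff.mpr rfl)]
    · rw [sum_const, card_filter_mk_eq_mk_of_ne hab, nsmul_eq_mul, Nat.cast_ofNat]

lemma cycleSum_le_two_pow (hμ : IsProbMass μ) : cycleSum μ m ≤ 2 ^ m := by
  set edgePairs : (Fin m → X) → Fin m → X × X := fun f i => (f i, f (cnext i))
  have hinj : Function.Injective edgePairs := fun f g h =>
    funext fun i => congrArg Prod.fst (congrFun h i)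
  have hnonneg : ∀ g : Fin m → X × X, 0 ≤ ∏ i, μ s((g i).1, (g i).2) := fun g =>
    prod_nonneg fun _ _ => hμ.1 _
  calc cycleSum μ m ≤ ∑ f, cycleWeight μ f :=
        sum_le_univ_sum_of_nonneg fun f => cycleWeight_nonneg hμ.1 f
    _ = ∑ g ∈ univ.image edgePairs, ∏ i, μ s((g i).1, (g i).2) := by
        rw [sum_image fun f _ g _ h => hinj h]; rfl
    _ ≤ ∑ g : Fin m → X × X, ∏ i, μ s((g i).1, (g i).2) := sum_le_univ_sum_of_nonneg hnonneg
    _ = ∏ _i : Fin m, ∑ p : X × X, μ s(p.1, p.2) :=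
        (Fintype.prod_sum fun _ (p : X × X) => μ s(p.1, p.2)).symm
    _ = 2 ^ m := by simp [hμ.sum_mk_eq_two]

variable {Y : Type*} [Fintype Y] [DecidableEq Y]

lemma IsProbMass.comp_sym2Map (hμ : IsProbMass μ) (g : X ≃ Y) :
    IsProbMass (μ ∘ Sym2.map g.symm) :=
  ⟨fun _ => hμ.1 _, fun _ he => hμ.2.1 _ he.map,
    ((Sym2.equivCongr g.symm).sum_comp μ).trans hμ.2.2⟩

lemma beta_comp_sym2Map (g : X ≃ Y) : beta (μ ∘ Sym2.map g.symm) m = beta μ m := by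
  rw [beta, beta, ← ((Equiv.refl (Fin m)).arrowCongr g).sum_comp]
  congr 1
  refine sum_congr rfl fun f _ => ?_
  simp [cycleWeight, show Function.Injective (((Equiv.refl (Fin m)).arrowCongr g) f) ↔
    Function.Injective f from g.injective.of_comp_iff f]

end

lemma bddAbove_betaSet (m : ℕ) :
    BddAbove {b : ℝ | ∃ (n : ℕ) (μ : Sym2 (Fin n) → ℝ), IsProbMass μ ∧ b = beta μ m} := by
  refine ⟨2 ^ m / (2 * m), ?_⟩
  rintro _ ⟨n, μ, hμ, rfl⟩
  rw [beta_eq_cycleSum_div]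
  exact div_le_div_of_nonneg_right (cycleSum_le_two_pow hμ) (by positivity)

lemma beta_le_betaSup {X : Type*} [Fintype X] [DecidableEq X] {μ : Sym2 X → ℝ} (m : ℕ)
    (hμ : IsProbMass μ) : beta μ m ≤ betaSup m :=
  le_csSup (bddAbove_betaSet m) ⟨Fintype.card X, _, hμ.comp_sym2Map (Fintype.equivFin X),
    (beta_comp_sym2Map _).symm⟩

lemma betaSup_pos {m : ℕ} (hm : 2 ≤ m) : 0 < betaSup m := by
  set N := #{e : Sym2 (Fin m) | ¬ e.IsDiag}
  set ν : Sym2 (Fin m) → ℝ := fun e => if ¬ e.IsDiag then 1 / N else 0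
  have hedge : ∀ i : Fin m, ¬ s(i, cnext i).IsDiag := fun i h =>
    cnext_ne hm i (Sym2.mk_isDiag_iff.mp h).symm
  have hN : (0 : ℝ) < N :=
    Nat.cast_pos.mpr (card_pos.mpr ⟨_, mem_filter.mpr ⟨mem_univ _, hedge ⟨0, by omega⟩⟩⟩)
  have hν : IsProbMass ν := by
    refine ⟨fun e => by positivity, fun e he => if_neg (not_not.mpr he), ?_⟩
    rw [← sum_filter, sum_const, nsmul_eq_mul, mul_one_div_cancel hN.ne']
  have hcycle : 0 < cycleWeight ν id := prod_pos fun i _ => by simp [ν, hedge i, hN]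
  calc 0 < cycleWeight ν id / (2 * m) := by positivity
    _ ≤ beta ν m := by
        rw [beta_eq_cycleSum_div]
        refine div_le_div_of_nonneg_right ?_ (by positivity)
        exact single_le_sum (fun f _ => cycleWeight_nonneg hν.1 f)
          (mem_filter.mpr ⟨mem_univ _, Function.injective_id⟩)
    _ ≤ betaSup m := beta_le_betaSup m hν

section
variable {X : Type*} [Fintype X] [DecidableEq X] {μ : Sym2 X → ℝ} {m : ℕ}

noncomputable def cycleSumPartial (μ : Sym2 X → ℝ) (m : ℕ) (e : Sym2 X) : ℝ :=
  ∑ f : Fin m → X with Function.Injective f, ∑ i : Fin m,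
    if s(f i, f (cnext i)) = e then ∏ j ∈ univ.erase i, μ s(f j, f (cnext j)) else 0

lemma sum_mul_cycleSumPartial (d : Sym2 X → ℝ) :
    ∑ e, d e * cycleSumPartial μ m e = ∑ f : Fin m → X with Function.Injective f, ∑ i : Fin m,
      d s(f i, f (cnext i)) * ∏ j ∈ univ.erase i, μ s(f j, f (cnext j)) := by
  simp only [cycleSumPartial, mul_sum, mul_ite, mul_zero]
  rw [sum_comm]
  refine sum_congr rfl fun f _ => ?_
  rw [sum_comm]
  refine sum_congr rfl fun i _ => ?_
  rw [sum_ite_eq, if_pos (mem_univ _)]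

lemma hasDerivAt_cycleSum_add_smul (d : Sym2 X → ℝ) :
    HasDerivAt (fun t : ℝ => cycleSum (μ + t • d) m) (∑ e, d e * cycleSumPartial μ m e) 0 := by
  rw [sum_mul_cycleSumPartial]
  refine HasDerivAt.fun_sum fun f _ => ?_
  have hedge : ∀ i : Fin m, HasDerivAt (fun t : ℝ => (μ + t • d) s(f i, f (cnext i)))
      (d s(f i, f (cnext i))) 0 := fun i => by
    simpa using ((hasDerivAt_id (0 : ℝ)).mul_const (d s(f i, f (cnext i)))).const_add
      (μ s(f i, f (cnext i)))
  refine (HasDerivAt.fun_finsetProd (u := univ) fun i _ => hedge i).congr_deriv ?_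
  simp [mul_comm]

def IsOptimalMass (μ : Sym2 X → ℝ) (m : ℕ) : Prop :=
  ∀ ν : Sym2 X → ℝ, IsProbMass ν → cycleSum ν m ≤ cycleSum μ m

lemma isOptimalMass_of_beta_eq_betaSup (hm : 0 < m) (hopt : beta μ m = betaSup m) :
    IsOptimalMass μ m := fun ν hν => by
  have h := beta_le_betaSup m hν
  rw [← hopt, beta_eq_cycleSum_div, beta_eq_cycleSum_div] at h
  exact (div_le_div_iff_of_pos_right (by positivity)).mp h

lemma IsProbMass.add_smul_single_sub_single (hμ : IsProbMass μ) {e₀ e₁ : Sym2 X}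
    (he₁ : ¬ e₁.IsDiag) {t : ℝ} (ht : t ∈ Set.Icc 0 (μ e₀)) :
    IsProbMass (μ + t • (Pi.single e₁ 1 - Pi.single e₀ 1)) := by
  refine ⟨fun e => ?_, fun e he => ?_, ?_⟩
  · have := hμ.1 e
    simp only [Pi.add_apply, Pi.smul_apply, Pi.sub_apply, Pi.single_apply, smul_eq_mul]
    split_ifs with h₁ h₀ h₀ <;> subst_vars <;> nlinarith [ht.1, ht.2]
  · have hne : e ≠ e₁ := by rintro rfl; exact he₁ he
    simp only [Pi.add_apply, Pi.smul_apply, Pi.sub_apply, Pi.single_apply, smul_eq_mul,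
      if_neg hne, hμ.2.1 e he]
    split_ifs with h₀
    · subst h₀
      linarith [ht.1, ht.2, hμ.2.1 e he]
    · ring
  · simp [sum_add_distrib, ← mul_sum, sum_sub_distrib, hμ.2.2]

lemma sum_mul_cycleSumPartial_self : ∑ e, μ e * cycleSumPartial μ m e = m * cycleSum μ m := by
  rw [sum_mul_cycleSumPartial, cycleSum, mul_sum]
  refine sum_congr rfl fun f _ => ?_
  simp [mul_prod_erase _ (fun j => μ s(f j, f (cnext j))), cycleWeight]

lemma cycleSumPartial_le_of_pos (hmax : IsOptimalMass μ m) (hμ : IsProbMass μ) {e₀ e₁ : Sym2 X}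
    (h₀ : 0 < μ e₀) (h₁ : ¬ e₁.IsDiag) :
    cycleSumPartial μ m e₁ ≤ cycleSumPartial μ m e₀ := by
  have hderiv := hasDerivAt_cycleSum_add_smul (μ := μ) (m := m) (Pi.single e₁ 1 - Pi.single e₀ 1)
  have hdir : ∑ e, (Pi.single e₁ 1 - Pi.single e₀ 1 : Sym2 X → ℝ) e * cycleSumPartial μ m e
      = cycleSumPartial μ m e₁ - cycleSumPartial μ m e₀ := by
    simp [sub_mul, sum_sub_distrib, Pi.single_apply]
  have hle := hderiv.nonpos_of_isMaxOn_Icc h₀ fun t ht => by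
    simpa using hmax _ (hμ.add_smul_single_sub_single h₁ ht)
  linarith

lemma cycleSumPartial_eq_of_pos (hmax : IsOptimalMass μ m) (hμ : IsProbMass μ) {e : Sym2 X}
    (he : 0 < μ e) : cycleSumPartial μ m e = m * cycleSum μ m := by
  have hnd : ∀ {e'}, 0 < μ e' → ¬ e'.IsDiag := fun h hd => (hμ.2.1 _ hd ▸ h).false
  rw [← sum_mul_cycleSumPartial_self, ← one_mul (cycleSumPartial μ m e), ← hμ.2.2, sum_mul]
  refine sum_congr rfl fun e' _ => ?_
  rcases (hμ.1 e').eq_or_lt with h | h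
  · rw [← h, zero_mul, zero_mul]
  · rw [le_antisymm (cycleSumPartial_le_of_pos hmax hμ he (hnd h))
      (cycleSumPartial_le_of_pos hmax hμ h (hnd he))]

lemma mul_cycleSumPartial_eq (hmax : IsOptimalMass μ m) (hμ : IsProbMass μ) (e : Sym2 X) :
    μ e * cycleSumPartial μ m e = μ e * (m * cycleSum μ m) := by
  rcases (hμ.1 e).eq_or_lt with h | h
  · rw [← h, zero_mul, zero_mul]
  · rw [cycleSumPartial_eq_of_pos hmax hμ h]

lemma wdeg_eq_sum_mem {x : X} (hx : μ s(x, x) = 0) :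
    wdeg μ x = ∑ e, if x ∈ e then μ e else 0 := by
  have himage : (univ.filter (x ∈ ·) : Finset (Sym2 X)) = univ.image (fun y => s(x, y)) := by
    ext e; simp [Sym2.mem_iff_exists, eq_comm]
  rw [← sum_filter, himage, sum_image fun _ _ _ _ h => Sym2.congr_right.mp h,
    ← add_sum_erase _ _ (mem_univ x), hx, zero_add, wdeg, filter_ne']

noncomputable def cycleSumAvoiding (μ : Sym2 X → ℝ) (m : ℕ) (x : X) : ℝ :=
  ∑ f : Fin m → X with Function.Injective f ∧ x ∉ Set.range f, cycleWeight μ f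

lemma cycleSumAvoiding_nonneg (h0 : ∀ e, 0 ≤ μ e) (x : X) : 0 ≤ cycleSumAvoiding μ m x :=
  sum_nonneg fun f _ => cycleWeight_nonneg h0 f

lemma cycleSumAvoiding_eq_zero_iff (h0 : ∀ e, 0 ≤ μ e) (x : X) :
    cycleSumAvoiding μ m x = 0 ↔ ∀ f : Fin m → X, Function.Injective f →
      (∀ i, 0 < μ s(f i, f (cnext i))) → ∃ i, f i = x := by
  rw [cycleSumAvoiding, sum_eq_zero_iff_of_nonneg fun f _ => cycleWeight_nonneg h0 f]
  simp only [mem_filter, mem_univ, true_and, and_imp, cycleWeight, prod_eq_zero_iff,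
    Set.mem_range]
  refine forall_congr' fun f => imp_congr_right fun _ => ⟨fun h hpos => ?_, fun h hx => ?_⟩
  · by_contra hx
    obtain ⟨i, hi⟩ := h hx
    exact (hpos i).ne' hi
  · by_contra hne
    exact hx (h fun i => (h0 _).lt_of_ne fun hi => hne ⟨i, hi.symm⟩)

lemma sum_mem_mul_cycleSumPartial (hm : 2 ≤ m) (x : X) :
    ∑ e, (if x ∈ e then μ e else 0) * cycleSumPartial μ m e
      = 2 * (cycleSum μ m - cycleSumAvoiding μ m x) := by
  have hsplit := sum_filter_add_sum_filter_not (univ.filter Function.Injective)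
    (fun f : Fin m → X => x ∈ Set.range f) (cycleWeight μ)
  rw [filter_filter, filter_filter] at hsplit
  calc _ = ∑ f : Fin m → X with Function.Injective f,
        if x ∈ Set.range f then 2 * cycleWeight μ f else 0 := by
        rw [sum_mul_cycleSumPartial]
        refine sum_congr rfl fun f hf => ?_
        simp_rw [ite_mul, zero_mul, mul_prod_erase _ (fun j => μ s(f j, f (cnext j))) (mem_univ _)]
        rw [← sum_filter, sum_const, card_filter_mem_cycleEdge hm (mem_filter.mp hf).2]
        split_ifs <;> simp [cycleWeight]
    _ = 2 * (cycleSum μ m - cycleSumAvoiding μ m x) := by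
        rw [← sum_filter, filter_filter, ← mul_sum, cycleSum, cycleSumAvoiding, ← hsplit]
        ring

lemma wdeg_mul_eq (hm : 2 ≤ m) (hmax : IsOptimalMass μ m) (hμ : IsProbMass μ) (x : X) :
    wdeg μ x * (m * cycleSum μ m) = 2 * (cycleSum μ m - cycleSumAvoiding μ m x) := by
  rw [wdeg_eq_sum_mem (hμ.2.1 _ (Sym2.mk_isDiag_iff.mpr rfl)), sum_mul,
    ← sum_mem_mul_cycleSumPartial hm x]
  refine sum_congr rfl fun e _ => ?_
  simp only [ite_mul, zero_mul, mul_cycleSumPartial_eq hmax hμ e]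

end

theorem wdeg_upperbound_general (m : ℕ) (hm : 3 ≤ m) {X : Type*} [Fintype X] [DecidableEq X]
    (μ : Sym2 X → ℝ) (hμ : IsProbMass μ) (hopt : beta μ m = betaSup m)
    (x : X) :
    wdeg μ x ≤ 2 / m ∧
      (wdeg μ x = 2 / m ↔ ∀ f : Fin m → X, Function.Injective f →
        (∀ i, 0 < μ s(f i, f (cnext i))) → ∃ i, f i = x) := by
  have hT : 0 < cycleSum μ m := by
    have h := betaSup_pos (m := m) (by omega)
    rw [← hopt, beta_eq_cycleSum_div] at h
    exact (div_pos_iff_of_pos_right (by positivity)).mp h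
  have hkey := wdeg_mul_eq (by omega) (isOptimalMass_of_beta_eq_betaSup (by omega) hopt) hμ x
  have hA := cycleSumAvoiding_nonneg hμ.1 (m := m) x
  have hm0 : (0 : ℝ) < m := by norm_cast; omega
  have hwdeg : wdeg μ x = 2 / m - 2 * cycleSumAvoiding μ m x / (m * cycleSum μ m) := by
    field_simp
    linarith
  rw [← cycleSumAvoiding_eq_zero_iff hμ.1, hwdeg]
  constructor
  · have : 0 ≤ 2 * cycleSumAvoiding μ m x / (m * cycleSum μ m) := by positivity
    linarith
  · simp [hm0.ne', hT.ne']

/-- For `m ≥ 3` and `μ ∈ Opt(m)`: any vertex `x ∈ supp μ̄` satisfies `μ̄(x) ≤ 2/m`, with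
equality iff `x` belongs to every unlabeled `m`-cycle of the support graph `G_μ`. -/
theorem wdeg_upperbound (m : ℕ) (hm : 3 ≤ m) {X : Type*} [Fintype X] [DecidableEq X]
    (μ : Sym2 X → ℝ) (hμ : IsProbMass μ) (hopt : beta μ m = betaSup m)
    (x : X) (hx : 0 < wdeg μ x) :
    wdeg μ x ≤ 2 / m ∧
      (wdeg μ x = 2 / m ↔ ∀ f : Fin m → X, Function.Injective f →
        (∀ i, 0 < μ s(f i, f (cnext i))) → ∃ i, f i = x) :=
  wdeg_upperbound_general m hm μ hμ hopt x
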